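/- arXiv:2405.15447 — 8 statements merged into one kernel-verified Lean document; each statement's English description precedes it below -/
import Mathlib

section
/- Let m, l, n be natural numbers with m ≥ 2 and l ≥ m, let M : ℝⁿ → Matrix (Fin m) (Fin l) ℝ be a matrix-valued map each of whose entries is differentiable at a point x₀ ∈ ℝⁿ, and suppose rank (M x₀) ≤ m − 2. Then for every injective map σ : Fin m → Fin l, the real-valued function x ↦ det (fun i j => M x i (σ j)) (the m×m minor of M x with columns selected by σ) has vanishing Fréchet derivative at x₀. (Consequently, every point of the shakiness variety, defined by the vanishing of all m×m minors of the rigidity matrix, at which the rigidity matrix has rank less than m − 1 — i.e. at which more than one independent non-trivial infinitesimal flex exists — is a singular point of that variety.) -/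
/-!
The derivative of the determinant at `A` in the direction `H` is `∑ i, det (A with row i
replaced by H i)`. Each of these matrices keeps `m - 1` rows of `A`, which span a space of
dimension at most `rank A ≤ m - 2`, so each is singular and the derivative vanishes. A minor of
`M x₀` has rank at most `rank (M x₀)`, and the chain rule finishes the argument.
-/

open Function Module Submodule

theorem not_linearIndependent_update_of_finrank_span_add_two_le
    {K V ι : Type*} [DivisionRing K] [AddCommGroup V] [Module K V] [Fintype ι] [DecidableEq ι]
    {v : ι → V} (hv : finrank K (span K (Set.range v)) + 2 ≤ Fintype.card ι) (i : ι) (w : V) :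
    ¬ LinearIndependent K (update v i w) := by
  intro hind
  have hrest : LinearIndependent K fun j : {j // j ≠ i} => v j := by
    convert hind.comp _ Subtype.val_injective using 1
    funext j
    exact (update_of_ne j.2 w v).symm
  have : Module.Finite K (span K (Set.range v)) := .span_of_finite K (Set.finite_range v)
  have hcard : Fintype.card {j // j ≠ i} ≤ finrank K (span K (Set.range v)) :=
    calc Fintype.card {j // j ≠ i}
        = finrank K (span K (Set.range fun j : {j // j ≠ i} => v j)) :=
          (finrank_span_eq_card hrest).symm
      _ ≤ finrank K (span K (Set.range v)) :=
          finrank_mono (span_mono (Set.range_comp_subset_range _ _))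
  simp only [Fintype.card_subtype_compl, Fintype.card_subtype_eq] at hcard
  omega

theorem ContinuousAlternatingMap.linearDeriv_eq_zero_of_finrank_span_add_two_le
    {K V W ι : Type*} [DivisionRing K] [AddCommGroup V] [Module K V] [TopologicalSpace V]
    [AddCommGroup W] [Module K W] [TopologicalSpace W] [ContinuousAdd W]
    [Fintype ι] [DecidableEq ι] (f : V [⋀^ι]→L[K] W) {v : ι → V}
    (hv : finrank K (span K (Set.range v)) + 2 ≤ Fintype.card ι) :
    f.toContinuousMultilinearMap.linearDeriv v = 0 := by
  ext y
  rw [ContinuousMultilinearMap.linearDeriv_apply]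
  exact Finset.sum_eq_zero fun i _ => f.toAlternatingMap.map_linearDependent _
    (not_linearIndependent_update_of_finrank_span_add_two_le hv i (y i))

noncomputable def Matrix.detRowContinuousAlternating (R ι : Type*) [CommRing R]
    [TopologicalSpace R] [IsTopologicalRing R] [Fintype ι] [DecidableEq ι] :
    (ι → R) [⋀^ι]→L[R] R :=
  { Matrix.detRowAlternating with cont := continuous_id.matrix_det }

theorem fderiv_det_eq_zero_of_rank_add_two_le
    {𝕜 E ι : Type*} [NontriviallyNormedField 𝕜] [NormedAddCommGroup E] [NormedSpace 𝕜 E]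
    [Fintype ι] [DecidableEq ι] {A : E → ι → ι → 𝕜} {x : E} (hA : DifferentiableAt 𝕜 A x)
    (hrank : (Matrix.of (A x)).rank + 2 ≤ Fintype.card ι) :
    fderiv 𝕜 (fun y => (Matrix.of (A y)).det) x = 0 := by
  have hderiv := (Matrix.detRowContinuousAlternating 𝕜 ι).toContinuousMultilinearMap.hasFDerivAt
    (A x) |>.comp x hA.hasFDerivAt
  rw [Matrix.rank_eq_finrank_span_row] at hrank
  rw [ContinuousAlternatingMap.linearDeriv_eq_zero_of_finrank_span_add_two_le (v := A x) _ hrank,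
    ContinuousLinearMap.zero_comp] at hderiv
  exact hderiv.fderiv

theorem minor_fderiv_eq_zero_of_rank_le_general
    (m l n : ℕ) (hm : 2 ≤ m)
    (M : (Fin n → ℝ) → Matrix (Fin m) (Fin l) ℝ) (x₀ : Fin n → ℝ)
    (hdiff : ∀ i j, DifferentiableAt ℝ (fun x => M x i j) x₀)
    (hrank : Matrix.rank (M x₀) ≤ m - 2) :
    ∀ σ : Fin m → Fin l, Function.Injective σ →
      fderiv ℝ (fun x => Matrix.det (Matrix.of fun i j => M x i (σ j))) x₀ = 0 := by
  intro σ _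
  have hminor : (Matrix.of fun i j => M x₀ i (σ j)).rank ≤ m - 2 :=
    (Matrix.rank_submatrix_le (M x₀) id σ).trans hrank
  refine fderiv_det_eq_zero_of_rank_add_two_le
    (differentiableAt_pi.2 fun i => differentiableAt_pi.2 fun j => hdiff i (σ j)) ?_
  rw [Fintype.card_fin]
  omega

/-- Every point at which the (entrywise differentiable) rigidity-type matrix has
rank at most `m - 2` is a point where every `m × m` minor has vanishing
Fréchet derivative. -/
theorem minor_fderiv_eq_zero_of_rank_le
    (m l n : ℕ) (hm : 2 ≤ m) (hl : m ≤ l)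
    (M : (Fin n → ℝ) → Matrix (Fin m) (Fin l) ℝ) (x₀ : Fin n → ℝ)
    (hdiff : ∀ i j, DifferentiableAt ℝ (fun x => M x i j) x₀)
    (hrank : Matrix.rank (M x₀) ≤ m - 2) :
    ∀ σ : Fin m → Fin l, Function.Injective σ →
      fderiv ℝ (fun x => Matrix.det (Matrix.of fun i j => M x i (σ j))) x₀ = 0 :=
  minor_fderiv_eq_zero_of_rank_le_general m l n hm M x₀ hdiff hrank
end

section
/- Let y(X) = (1/2)X³ + X⁵ + (9/4)X⁷ + (13/2)X⁹ ∈ ℝ[X], let k ≥ 1 and N ≥ k be natural numbers, let v₁ⱼ, v₂ⱼ ∈ ℝ for k ≤ j ≤ N, and set τᵢ = Σ_{j=k}^{N} vᵢⱼ Xʲ ∈ ℝ[X] for i = 1, 2. Define F := (τ₂ − τ₁)² + (3 − y(τ₂) − y(τ₁))² − 9 ∈ ℝ[X]. Then the coefficient of Xʲ in F vanishes for all j < 2k, and the coefficient of X^{2k} in F equals (v₁ₖ − v₂ₖ)². -/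
open Polynomial Finset

/-- For the two-point guidance problem of the Connelly–Servatius double-Watt
mechanism: with `τᵢ = ∑_{j=k}^{N} vᵢⱼ Xʲ`, the squared-distance constraint
`F = (τ₂ - τ₁)² + (3 - y(τ₂) - y(τ₁))² - 9` has vanishing coefficients below
order `2k` and its coefficient of `X^(2k)` is `(v₁ₖ - v₂ₖ)²`. -/
theorem doubleWatt_F_low_coeffs
    (k N : ℕ) (hk : 1 ≤ k) (hN : k ≤ N) (v₁ v₂ : ℕ → ℝ) :
    let y : ℝ[X] := C (1/2) * X ^ 3 + X ^ 5 + C (9/4) * X ^ 7 + C (13/2) * X ^ 9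
    let τ₁ : ℝ[X] := ∑ j ∈ Icc k N, C (v₁ j) * X ^ j
    let τ₂ : ℝ[X] := ∑ j ∈ Icc k N, C (v₂ j) * X ^ j
    let F : ℝ[X] := (τ₂ - τ₁) ^ 2 + (3 - y.comp τ₂ - y.comp τ₁) ^ 2 - 9
    (∀ j < 2 * k, F.coeff j = 0) ∧ F.coeff (2 * k) = (v₁ k - v₂ k) ^ 2 := by
  intro y τ₁ τ₂ F
  -- factor out X^k from the τ's
  have hfac : ∀ v : ℕ → ℝ, (∑ j ∈ Icc k N, C (v j) * X ^ j : ℝ[X])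
      = X ^ k * ∑ j ∈ Icc k N, C (v j) * X ^ (j - k) := by
    intro v
    rw [Finset.mul_sum]
    refine Finset.sum_congr rfl fun j hj => ?_
    have hkj : k ≤ j := (Finset.mem_Icc.mp hj).1
    rw [mul_left_comm, ← pow_add, Nat.add_sub_cancel' hkj]
  set s₁ : ℝ[X] := ∑ j ∈ Icc k N, C (v₁ j) * X ^ (j - k) with hs₁
  set s₂ : ℝ[X] := ∑ j ∈ Icc k N, C (v₂ j) * X ^ (j - k) with hs₂
  have hτ₁ : τ₁ = X ^ k * s₁ := hfac v₁
  have hτ₂ : τ₂ = X ^ k * s₂ := hfac v₂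
  have hc : ∀ v : ℕ → ℝ,
      (∑ j ∈ Icc k N, C (v j) * X ^ (j - k) : ℝ[X]).coeff 0 = v k := by
    intro v
    rw [finset_sum_coeff, Finset.sum_eq_single k]
    · simp
    · intro j hj hne
      have hjk : j - k ≠ 0 := by
        have := (Finset.mem_Icc.mp hj).1
        omega
      rw [coeff_C_mul, coeff_X_pow, if_neg (fun h => hjk h.symm), mul_zero]
    · intro h
      exact absurd (Finset.mem_Icc.mpr ⟨le_refl k, hN⟩) h
  -- y composed: divisible by X^(3k)
  set p : ℝ[X] := C (1/2 : ℝ) + X ^ 2 + C (9/4 : ℝ) * X ^ 4 + C (13/2 : ℝ) * X ^ 6 with hp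
  have hyp : y = X ^ 3 * p := by simp only [y, p]; ring
  have hy : ∀ τ : ℝ[X], y.comp τ = τ ^ 3 * p.comp τ := by
    intro τ; rw [hyp, mul_comp, pow_comp, X_comp]
  set g : ℝ[X] := y.comp τ₂ + y.comp τ₁ with hg
  have hdvd : (X : ℝ[X]) ^ (2 * k + 1) ∣ g * (g - 6) := by
    have h3 : (X : ℝ[X]) ^ (3 * k) ∣ g := by
      apply dvd_add
      · rw [hy, hτ₂]
        exact Dvd.dvd.mul_right ⟨s₂ ^ 3, by rw [mul_pow, ← pow_mul, mul_comm k 3]⟩ _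
      · rw [hy, hτ₁]
        exact Dvd.dvd.mul_right ⟨s₁ ^ 3, by rw [mul_pow, ← pow_mul, mul_comm k 3]⟩ _
    exact dvd_mul_of_dvd_left
      ((pow_dvd_pow (X : ℝ[X]) (by omega : 2 * k + 1 ≤ 3 * k)).trans h3) _
  obtain ⟨w, hw⟩ := hdvd
  have hF : F = X ^ (2 * k) * (s₂ - s₁) ^ 2 + X ^ (2 * k + 1) * w := by
    have : F = (τ₂ - τ₁) ^ 2 + g * (g - 6) := by
      simp only [F, hg]; ring
    rw [this, hw, hτ₁, hτ₂]
    ring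
  constructor
  · intro j hj
    rw [hF, coeff_add, mul_comm ((X : ℝ[X]) ^ (2 * k)), mul_comm ((X : ℝ[X]) ^ (2 * k + 1)),
      coeff_mul_X_pow', coeff_mul_X_pow', if_neg (by omega), if_neg (by omega), add_zero]
  · rw [hF, coeff_add, mul_comm ((X : ℝ[X]) ^ (2 * k)), mul_comm ((X : ℝ[X]) ^ (2 * k + 1)),
      coeff_mul_X_pow', coeff_mul_X_pow', if_pos le_rfl, if_neg (by omega), add_zero,
      Nat.sub_self, sq, mul_coeff_zero, coeff_sub, hs₁, hs₂, hc v₁, hc v₂]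
    ring
end

section
/- Let y(X) = (1/2)X³ + X⁵ + (9/4)X⁷ + (13/2)X⁹ ∈ ℝ[X], let k ≥ 1 and N ≥ 2k be natural numbers, let v₁ⱼ, v₂ⱼ ∈ ℝ for k ≤ j ≤ N with v₂ⱼ = v₁ⱼ for all k ≤ j ≤ 2k − 1, and set τᵢ = Σ_{j=k}^{N} vᵢⱼ Xʲ ∈ ℝ[X] for i = 1, 2. Define F := (τ₂ − τ₁)² + (3 − y(τ₂) − y(τ₁))² − 9 ∈ ℝ[X], and suppose moreover v₂ⱼ = v₁ⱼ for 2k ≤ j ≤ min(2k, N) (i.e. the coefficients of τ₁ and τ₂ agree up to index 2k). Then the coefficient of Xʲ in F vanishes for all j < 3k, and the coefficient of X^{3k} in F equals −6·v₁ₖ³. In particular, for k = 1 and v₁₁ ≠ 0, the coefficient of X³ in F is −6v₁₁³ ≠ 0, so the cusp configuration of the Connelly–Servatius double-Watt mechanism admits a (1,2)-flex but no (1,3)-flex. -/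
open Polynomial Finset

lemma tau_coeff' (k N : ℕ) (v : ℕ → ℝ) (d : ℕ) :
    (∑ j ∈ Icc k N, C (v j) * X ^ j).coeff d = if d ∈ Icc k N then v d else 0 := by
  rw [finset_sum_coeff]
  simp only [coeff_C_mul, coeff_X_pow, mul_ite, mul_one, mul_zero]
  simp [Finset.sum_ite_eq]

lemma tau_dvd' (k N : ℕ) (v : ℕ → ℝ) :
    (X : ℝ[X]) ^ k ∣ ∑ j ∈ Icc k N, C (v j) * X ^ j := by
  rw [X_pow_dvd_iff]
  intro d hd
  rw [tau_coeff', if_neg]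
  simp only [mem_Icc]
  omega

lemma coeff_zero_of_dvd' {p : ℝ[X]} {n d : ℕ} (h : (X : ℝ[X]) ^ n ∣ p) (hd : d < n) :
    p.coeff d = 0 := (X_pow_dvd_iff.mp h) d hd

lemma cube_coeff' (k : ℕ) (p : ℝ[X]) (hp : (X : ℝ[X]) ^ k ∣ p) :
    (p ^ 3).coeff (3 * k) = (p.coeff k) ^ 3 := by
  obtain ⟨q, rfl⟩ := hp
  rw [mul_pow, ← pow_mul]
  have h1 := coeff_X_pow_mul (q ^ 3) (k * 3) 0
  have h2 := coeff_X_pow_mul q k 0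
  simp only [zero_add] at h1 h2
  rw [show 3 * k = k * 3 by ring, h1, h2, coeff_zero_eq_eval_zero, eval_pow,
    ← coeff_zero_eq_eval_zero]

/-- For the two-point guidance problem of the Connelly–Servatius double-Watt
mechanism: if the coefficients of `τ₁` and `τ₂` agree up to index `2k`, then
the squared-distance constraint `F` has vanishing coefficients below order
`3k` and its coefficient of `X^(3k)` is `-6 v₁ₖ³`.  In particular, for `k = 1`
and `v₁₁ ≠ 0` the coefficient of `X³` in `F` is `-6 v₁₁³ ≠ 0`, so the cusp
configuration admits a `(1,2)`-flex but no `(1,3)`-flex. -/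
theorem doubleWatt_F_coeff_three_k
    (k N : ℕ) (hk : 1 ≤ k) (hN : 2 * k ≤ N) (v₁ v₂ : ℕ → ℝ)
    (hagree : ∀ j, k ≤ j → j ≤ 2 * k → v₂ j = v₁ j) :
    let y : ℝ[X] := C (1/2) * X ^ 3 + X ^ 5 + C (9/4) * X ^ 7 + C (13/2) * X ^ 9
    let τ₁ : ℝ[X] := ∑ j ∈ Icc k N, C (v₁ j) * X ^ j
    let τ₂ : ℝ[X] := ∑ j ∈ Icc k N, C (v₂ j) * X ^ j
    let F : ℝ[X] := (τ₂ - τ₁) ^ 2 + (3 - y.comp τ₂ - y.comp τ₁) ^ 2 - 9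
    (∀ j < 3 * k, F.coeff j = 0) ∧ F.coeff (3 * k) = -6 * (v₁ k) ^ 3 := by
  intro y τ₁ τ₂ F
  have hd1 : (X : ℝ[X]) ^ k ∣ τ₁ := tau_dvd' k N v₁
  have hd2 : (X : ℝ[X]) ^ k ∣ τ₂ := tau_dvd' k N v₂
  -- difference divisible by X^(2k+1)
  have hdiff : (X : ℝ[X]) ^ (2 * k + 1) ∣ τ₂ - τ₁ := by
    rw [X_pow_dvd_iff]
    intro d hd
    rw [coeff_sub, tau_coeff', tau_coeff']
    by_cases h : d ∈ Icc k N
    · rw [if_pos h, if_pos h, hagree d (mem_Icc.mp h).1 (by omega), sub_self]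
    · rw [if_neg h, if_neg h, sub_self]
  -- y.comp expansion
  have hcomp : ∀ τ : ℝ[X],
      y.comp τ = C (1/2) * τ ^ 3 + τ ^ 5 + C (9/4) * τ ^ 7 + C (13/2) * τ ^ 9 := by
    intro τ
    simp [y, add_comp, mul_comp, pow_comp, X_comp, C_comp]
  have hyd : ∀ τ : ℝ[X], (X : ℝ[X]) ^ k ∣ τ → (X : ℝ[X]) ^ (3 * k) ∣ y.comp τ := by
    intro τ hτ
    rw [hcomp]
    have h3 : (X : ℝ[X]) ^ (3 * k) ∣ τ ^ 3 := by
      rw [show 3 * k = k * 3 by ring, pow_mul]; exact pow_dvd_pow_of_dvd hτ 3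
    have hm : ∀ m : ℕ, 3 ≤ m → (X : ℝ[X]) ^ (3 * k) ∣ τ ^ m := by
      intro m hm
      calc (X : ℝ[X]) ^ (3 * k) ∣ (X : ℝ[X]) ^ (m * k) := pow_dvd_pow _ (by nlinarith)
        _ ∣ τ ^ m := by rw [pow_mul']; exact pow_dvd_pow_of_dvd hτ m
    exact dvd_add (dvd_add (dvd_add ((h3).mul_left _) (hm 5 (by norm_num)))
      ((hm 7 (by norm_num)).mul_left _)) ((hm 9 (by norm_num)).mul_left _)
  set A : ℝ[X] := y.comp τ₂ + y.comp τ₁ with hA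
  have hAd : (X : ℝ[X]) ^ (3 * k) ∣ A := dvd_add (hyd τ₂ hd2) (hyd τ₁ hd1)
  have hFeq : F = (τ₂ - τ₁) ^ 2 + A ^ 2 - 6 * A := by
    simp only [F, hA]; ring
  -- coeff of y.comp τ at 3k
  have hycoeff : ∀ (τ : ℝ[X]), (X : ℝ[X]) ^ k ∣ τ →
      (y.comp τ).coeff (3 * k) = (1/2) * (τ.coeff k) ^ 3 := by
    intro τ hτ
    have hm : ∀ m : ℕ, 4 ≤ m → (τ ^ m).coeff (3 * k) = 0 := by
      intro m hmm
      refine coeff_zero_of_dvd' (n := m * k) ?_ (by nlinarith)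
      rw [pow_mul']; exact pow_dvd_pow_of_dvd hτ m
    rw [hcomp, coeff_add, coeff_add, coeff_add, coeff_C_mul, coeff_C_mul, coeff_C_mul,
      cube_coeff' k τ hτ, hm 5 (by norm_num), hm 7 (by norm_num), hm 9 (by norm_num)]
    ring
  have hdiffsq : ((τ₂ - τ₁) ^ 2).coeff (3 * k) = 0 := by
    refine coeff_zero_of_dvd' (n := 2 * (2 * k + 1)) ?_ (by omega)
    rw [pow_mul']; exact pow_dvd_pow_of_dvd hdiff 2
  have hAsq : (A ^ 2).coeff (3 * k) = 0 := by
    refine coeff_zero_of_dvd' (n := 2 * (3 * k)) ?_ (by omega)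
    rw [pow_mul']; exact pow_dvd_pow_of_dvd hAd 2
  have hAc : A.coeff (3 * k) = (v₁ k) ^ 3 := by
    rw [hA, coeff_add, hycoeff τ₂ hd2, hycoeff τ₁ hd1,
      tau_coeff', tau_coeff', if_pos (mem_Icc.mpr ⟨le_refl k, by omega⟩),
      if_pos (mem_Icc.mpr ⟨le_refl k, by omega⟩), hagree k le_rfl (by omega)]
    ring
  constructor
  · intro j hj
    refine coeff_zero_of_dvd' (n := 3 * k) ?_ hj
    rw [hFeq]
    have h6 : (X : ℝ[X]) ^ (3 * k) ∣ 6 * A := hAd.mul_left 6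
    have hsq : (X : ℝ[X]) ^ (3 * k) ∣ (τ₂ - τ₁) ^ 2 := by
      calc (X : ℝ[X]) ^ (3 * k) ∣ (X : ℝ[X]) ^ (2 * (2 * k + 1)) := pow_dvd_pow _ (by omega)
        _ ∣ (τ₂ - τ₁) ^ 2 := by rw [pow_mul']; exact pow_dvd_pow_of_dvd hdiff 2
    exact dvd_sub (dvd_add hsq (dvd_pow hAd (by norm_num))) h6
  · rw [hFeq, coeff_sub, coeff_add, hdiffsq, hAsq,
      (map_ofNat C 6).symm, coeff_C_mul, hAc]
    ring
end

section
/- Let y(X) = (1/2)X³ + X⁵ + (9/4)X⁷ + (13/2)X⁹ ∈ ℝ[X], let v₁₂ ≥ 0 and v₁₃ be real numbers, and set τ₁ = v₁₂X² + v₁₃X³ and τ₂ = v₁₂X² + (v₁₃ + √(6v₁₂³))X³ in ℝ[X]. Define F := (τ₂ − τ₁)² + (3 − y(τ₂) − y(τ₁))² − 9 ∈ ℝ[X]. Then the coefficient of Xʲ in F vanishes for every j ≤ 6. (This exhibits the (2,6)-flexibility of the cusp configuration of the Connelly–Servatius double-Watt mechanism, the sign choice ±√(6v₁₂³) corresponding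 to the two ways out of the cusp.) -/
open Polynomial

set_option linter.all false in
/-- The `(2,6)`-flexibility of the cusp configuration of the
Connelly–Servatius double-Watt mechanism: with
`τ₁ = v₁₂X² + v₁₃X³` and `τ₂ = v₁₂X² + (v₁₃ + √(6v₁₂³))X³`, all coefficients
of the squared-distance constraint `F` up to order 6 vanish. -/
theorem doubleWatt_two_six_flex (v₁₂ v₁₃ : ℝ) (h : 0 ≤ v₁₂) :
    let y : ℝ[X] := C (1/2) * X ^ 3 + X ^ 5 + C (9/4) * X ^ 7 + C (13/2) * X ^ 9
    let τ₁ : ℝ[X] := C v₁₂ * X ^ 2 + C v₁₃ * X ^ 3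
    let τ₂ : ℝ[X] := C v₁₂ * X ^ 2 + C (v₁₃ + Real.sqrt (6 * v₁₂ ^ 3)) * X ^ 3
    let F : ℝ[X] := (τ₂ - τ₁) ^ 2 + (3 - y.comp τ₂ - y.comp τ₁) ^ 2 - 9
    ∀ j ≤ 6, F.coeff j = 0 := by
  intro y τ₁ τ₂ F j hj
  set s := Real.sqrt (6 * v₁₂ ^ 3) with hs_def
  have hs : s ^ 2 = 6 * v₁₂ ^ 3 := Real.sq_sqrt (by positivity)
  obtain ⟨u₁, hu₁⟩ : ∃ p : ℝ[X], p = C v₁₂ + C v₁₃ * X := ⟨_, rfl⟩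
  obtain ⟨u₂, hu₂⟩ : ∃ p : ℝ[X], p = C v₁₂ + (C v₁₃ + C s) * X := ⟨_, rfl⟩
  obtain ⟨h₁, hh₁⟩ : ∃ p : ℝ[X], p = C (1/2) * u₁ ^ 3 + X ^ 4 * u₁ ^ 5
      + C (9/4) * X ^ 8 * u₁ ^ 7 + C (13/2) * X ^ 12 * u₁ ^ 9 := ⟨_, rfl⟩
  obtain ⟨h₂, hh₂⟩ : ∃ p : ℝ[X], p = C (1/2) * u₂ ^ 3 + X ^ 4 * u₂ ^ 5
      + C (9/4) * X ^ 8 * u₂ ^ 7 + C (13/2) * X ^ 12 * u₂ ^ 9 := ⟨_, rfl⟩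
  have t1 : τ₁ = X ^ 2 * u₁ := by simp only [τ₁, hu₁]; ring
  have t2 : τ₂ = X ^ 2 * u₂ := by simp only [τ₂, hu₂, C_add]; ring
  have e1 : y.comp τ₁ = X ^ 6 * h₁ := by
    simp only [y, add_comp, mul_comp, pow_comp, C_comp, X_comp, t1, hh₁]
    ring
  have e2 : y.comp τ₂ = X ^ 6 * h₂ := by
    simp only [y, add_comp, mul_comp, pow_comp, C_comp, X_comp, t2, hh₂]
    ring
  have e3 : τ₂ - τ₁ = C s * X ^ 3 := by
    simp only [τ₁, τ₂, C_add]; ring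
  have key : F = (C s ^ 2 + X ^ 6 * (h₁ + h₂) ^ 2 - 6 * (h₁ + h₂)) * X ^ 6 := by
    simp only [F]
    rw [e1, e2, e3]
    ring
  rw [key, coeff_mul_X_pow']
  interval_cases j <;> simp only [if_true, if_false, Nat.le_refl, Nat.reduceLeDiff]
  · rw [coeff_zero_eq_eval_zero]
    simp only [hh₁, hh₂, hu₁, hu₂, eval_add, eval_sub, eval_mul, eval_pow, eval_C, eval_X,
      eval_ofNat]
    linear_combination hs
end

section
/- Let y(X) = (1/2)X³ + X⁵ + (9/4)X⁷ + (13/2)X⁹ ∈ ℝ[X], let k ≥ 1 and N ≥ k be natural numbers, let v₁ⱼ, v₂ⱼ ∈ ℝ for k ≤ j ≤ N, and set τᵢ = Σ_{j=k}^{N} vᵢⱼ Xʲ ∈ ℝ[X] for i = 1, 2. Define F := (τ₂ − τ₁)² + (3 + y(τ₂) − y(τ₁))² − 9 and H := y(τ₁) + y(τ₂) in ℝ[X]. Then: (a) the coefficient of Xʲ in F vanishes for all j < 2k, and the coefficient of X^{2k} in F equals (v₁ₖ − v₂ₖ)²; (b) the coefficient of Xʲ in H vanishes for all j < 3k, and the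 coefficient of X^{3k} in H equals (v₁ₖ³ + v₂ₖ³)/2. In particular, if v₂ⱼ = v₁ⱼ for all j, then the coefficient of X^{3k} in H equals v₁ₖ³, which is nonzero whenever v₁ₖ ≠ 0; this yields the sequence of irreducible (k, 3k−1)-flexes of Stachel's extended double-Watt framework. -/
open Polynomial Finset

/-- Stachel's extended double-Watt framework in its branching configuration:
with `τᵢ = ∑_{j=k}^{N} vᵢⱼ Xʲ`, the bar constraint
`F = (τ₂ - τ₁)² + (3 + y(τ₂) - y(τ₁))² - 9` vanishes below order `2k` with
coefficient `(v₁ₖ - v₂ₖ)²` at order `2k`, and the midpoint-guidance constraint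
`H = y(τ₁) + y(τ₂)` vanishes below order `3k` with coefficient
`(v₁ₖ³ + v₂ₖ³)/2` at order `3k`. -/
theorem stachel_doubleWatt_F_H_coeffs
    (k N : ℕ) (hk : 1 ≤ k) (hN : k ≤ N) (v₁ v₂ : ℕ → ℝ) :
    let y : ℝ[X] := C (1/2) * X ^ 3 + X ^ 5 + C (9/4) * X ^ 7 + C (13/2) * X ^ 9
    let τ₁ : ℝ[X] := ∑ j ∈ Icc k N, C (v₁ j) * X ^ j
    let τ₂ : ℝ[X] := ∑ j ∈ Icc k N, C (v₂ j) * X ^ j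
    let F : ℝ[X] := (τ₂ - τ₁) ^ 2 + (3 + y.comp τ₂ - y.comp τ₁) ^ 2 - 9
    let H : ℝ[X] := y.comp τ₁ + y.comp τ₂
    ((∀ j < 2 * k, F.coeff j = 0) ∧ F.coeff (2 * k) = (v₁ k - v₂ k) ^ 2) ∧
      ((∀ j < 3 * k, H.coeff j = 0) ∧
        H.coeff (3 * k) = ((v₁ k) ^ 3 + (v₂ k) ^ 3) / 2) := by
  intro y τ₁ τ₂ F H
  have hk0 : k ≠ 0 := by omega
  have h2k : 2 * k ≠ 0 := by omega
  have h4k : 4 * k ≠ 0 := by omega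
  have h6k : 6 * k ≠ 0 := by omega
  have hdvd : ∀ v : ℕ → ℝ, (X : ℝ[X]) ^ k ∣ ∑ j ∈ Icc k N, C (v j) * X ^ j := by
    intro v
    exact Finset.dvd_sum fun j hj => Dvd.dvd.mul_left (pow_dvd_pow X (mem_Icc.mp hj).1) _
  have hcoeff : ∀ v : ℕ → ℝ, (∑ j ∈ Icc k N, C (v j) * X ^ j).coeff k = v k := by
    intro v
    rw [finset_sum_coeff, Finset.sum_eq_single k]
    · simp
    · intro j hj hne
      simp [coeff_C_mul, coeff_X_pow, Ne.symm hne]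
    · intro h; exact absurd (mem_Icc.mpr ⟨le_rfl, hN⟩) h
  obtain ⟨σ₁, hσ₁⟩ := hdvd v₁
  obtain ⟨σ₂, hσ₂⟩ := hdvd v₂
  have hτ₁ : τ₁ = X ^ k * σ₁ := hσ₁
  have hτ₂ : τ₂ = X ^ k * σ₂ := hσ₂
  have hs : ∀ (σ : ℝ[X]) (v : ℕ → ℝ),
      (∑ j ∈ Icc k N, C (v j) * X ^ j) = X ^ k * σ → σ.eval 0 = v k := by
    intro σ v hEq
    have h1 := hcoeff v
    rw [hEq] at h1
    have h2 : (X ^ k * σ).coeff (0 + k) = σ.coeff 0 := coeff_X_pow_mul σ k 0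
    rw [zero_add] at h2
    rw [h2] at h1
    rw [← coeff_zero_eq_eval_zero, h1]
  have hs₁ := hs σ₁ v₁ hσ₁
  have hs₂ := hs σ₂ v₂ hσ₂
  set G₁ : ℝ[X] := C (1/2) * σ₁ ^ 3 + X ^ (2*k) * σ₁ ^ 5 + C (9/4) * (X ^ (4*k) * σ₁ ^ 7)
      + C (13/2) * (X ^ (6*k) * σ₁ ^ 9) with hG₁def
  set G₂ : ℝ[X] := C (1/2) * σ₂ ^ 3 + X ^ (2*k) * σ₂ ^ 5 + C (9/4) * (X ^ (4*k) * σ₂ ^ 7)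
      + C (13/2) * (X ^ (6*k) * σ₂ ^ 9) with hG₂def
  have hydef : y = C (1/2) * X ^ 3 + X ^ 5 + C (9/4) * X ^ 7 + C (13/2) * X ^ 9 := rfl
  have hyc : ∀ p : ℝ[X],
      y.comp p = C (1/2) * p ^ 3 + p ^ 5 + C (9/4) * p ^ 7 + C (13/2) * p ^ 9 := by
    intro p
    rw [hydef]
    simp [add_comp, mul_comp, pow_comp, X_comp, C_comp]
  set P : ℝ[X] := (σ₂ - σ₁) ^ 2 + 6 * (X ^ k * (G₂ - G₁)) + X ^ (4*k) * (G₂ - G₁) ^ 2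
    with hPdef
  have hF : F = X ^ (2*k) * P := by
    have hF0 : F = (τ₂ - τ₁) ^ 2 + (3 + y.comp τ₂ - y.comp τ₁) ^ 2 - 9 := rfl
    rw [hF0, hyc, hyc, hτ₁, hτ₂, hPdef, hG₁def, hG₂def]
    ring
  have hH : H = X ^ (3*k) * (G₁ + G₂) := by
    have hH0 : H = y.comp τ₁ + y.comp τ₂ := rfl
    rw [hH0, hyc, hyc, hτ₁, hτ₂, hG₁def, hG₂def]
    ring
  have hG₁0 : G₁.eval 0 = (v₁ k) ^ 3 / 2 := by
    rw [hG₁def]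
    simp [hs₁, zero_pow h2k, zero_pow h4k, zero_pow h6k]
    ring
  have hG₂0 : G₂.eval 0 = (v₂ k) ^ 3 / 2 := by
    rw [hG₂def]
    simp [hs₂, zero_pow h2k, zero_pow h4k, zero_pow h6k]
    ring
  refine ⟨⟨?_, ?_⟩, ?_, ?_⟩
  · intro j hj
    exact (X_pow_dvd_iff.mp ⟨P, hF⟩) j hj
  · have h := coeff_X_pow_mul P (2*k) 0
    rw [zero_add] at h
    rw [hF, h, coeff_zero_eq_eval_zero, hPdef]
    simp [hs₁, hs₂, zero_pow hk0, zero_pow h4k]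
    ring
  · intro j hj
    exact (X_pow_dvd_iff.mp ⟨G₁ + G₂, hH⟩) j hj
  · have h := coeff_X_pow_mul (G₁ + G₂) (3*k) 0
    rw [zero_add] at h
    rw [hH, h, coeff_zero_eq_eval_zero]
    simp [hG₁0, hG₂0]
    ring
end

section
/- Let y(X) = (1/2)X³ + X⁵ + (9/4)X⁷ + (13/2)X⁹ ∈ ℝ[X], let v₁₁, v₁₂, v₂₁, v₂₂, a₀, a₁, a₂, a₃ be real numbers, set σ = a₀X² + a₁X³ + a₂X⁴ + a₃X⁵ ∈ ℝ[X] and τᵢ = vᵢ₁·σ + vᵢ₂·σ² for i = 1, 2, and define F := (τ₂ − τ₁)² + (3 − y(τ₂) − y(τ₁))² − 9 ∈ ℝ[X]. Then: the coefficient of Xʲ in F vanishes for all j ≤ 3; the coefficient of X⁴ in F equals a₀²(v₁₁ − v₂₁)²; and if v₂₁ = v₁₁, then the coefficient of X⁵ in F vanishes and the coefficient of X⁶ in F equals −6a₀³v₁₁³. Hence the polynomial parameter substitution t = t̄²(a₀ + a₁t̄ + …) turns the (1,2)-flex of the cusp configuration into a reducible (2,5)-flex, so the (2,6)-flex of the Connelly–Servatius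 double-Watt mechanism is irreducible. -/
open Polynomial

/-- The polynomial parameter substitution `t = t̄²(a₀ + a₁t̄ + a₂t̄² + a₃t̄³)`
turns the `(1,2)`-flex of the cusp configuration of the Connelly–Servatius
double-Watt mechanism into a reducible `(2,5)`-flex: with
`σ = a₀X² + a₁X³ + a₂X⁴ + a₃X⁵` and `τᵢ = vᵢ₁σ + vᵢ₂σ²`, the coefficients of
`F` up to order 3 vanish, the coefficient of `X⁴` is `a₀²(v₁₁ - v₂₁)²`, and if
`v₂₁ = v₁₁` then the coefficient of `X⁵` vanishes while that of `X⁶` equals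
`-6a₀³v₁₁³`. -/
theorem doubleWatt_substituted_flex_coeffs
    (v₁₁ v₁₂ v₂₁ v₂₂ a₀ a₁ a₂ a₃ : ℝ) :
    let y : ℝ[X] := C (1/2) * X ^ 3 + X ^ 5 + C (9/4) * X ^ 7 + C (13/2) * X ^ 9
    let σ : ℝ[X] := C a₀ * X ^ 2 + C a₁ * X ^ 3 + C a₂ * X ^ 4 + C a₃ * X ^ 5
    let τ₁ : ℝ[X] := C v₁₁ * σ + C v₁₂ * σ ^ 2
    let τ₂ : ℝ[X] := C v₂₁ * σ + C v₂₂ * σ ^ 2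
    let F : ℝ[X] := (τ₂ - τ₁) ^ 2 + (3 - y.comp τ₂ - y.comp τ₁) ^ 2 - 9
    (∀ j ≤ 3, F.coeff j = 0) ∧
      F.coeff 4 = a₀ ^ 2 * (v₁₁ - v₂₁) ^ 2 ∧
      (v₂₁ = v₁₁ → F.coeff 5 = 0 ∧ F.coeff 6 = -6 * a₀ ^ 3 * v₁₁ ^ 3) := by
  intro y σ τ₁ τ₂ F
  have comp_y : ∀ p : ℝ[X],
      y.comp p = p ^ 3 * (C (1/2) + p ^ 2 + C (9/4) * p ^ 4 + C (13/2) * p ^ 6) := by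
    intro p
    simp only [y, add_comp, mul_comp, C_comp, X_comp, pow_comp]
    ring
  obtain ⟨u, hu⟩ : ∃ u : ℝ[X], u = C a₀ + C a₁ * X + C a₂ * X ^ 2 + C a₃ * X ^ 3 := ⟨_, rfl⟩
  obtain ⟨w₁, hw₁⟩ : ∃ w : ℝ[X], w = C v₁₁ * u + C v₁₂ * X ^ 2 * u ^ 2 := ⟨_, rfl⟩
  obtain ⟨w₂, hw₂⟩ : ∃ w : ℝ[X], w = C v₂₁ * u + C v₂₂ * X ^ 2 * u ^ 2 := ⟨_, rfl⟩
  have hτ₁ : τ₁ = X ^ 2 * w₁ := by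
    simp only [τ₁, σ, hw₁, hu]; ring
  have hτ₂ : τ₂ = X ^ 2 * w₂ := by
    simp only [τ₂, σ, hw₂, hu]; ring
  obtain ⟨H₁, hH₁⟩ : ∃ H : ℝ[X],
      H = C (1/2) + (X ^ 2 * w₁) ^ 2 + C (9/4) * (X ^ 2 * w₁) ^ 4
          + C (13/2) * (X ^ 2 * w₁) ^ 6 := ⟨_, rfl⟩
  obtain ⟨H₂, hH₂⟩ : ∃ H : ℝ[X],
      H = C (1/2) + (X ^ 2 * w₂) ^ 2 + C (9/4) * (X ^ 2 * w₂) ^ 4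
          + C (13/2) * (X ^ 2 * w₂) ^ 6 := ⟨_, rfl⟩
  obtain ⟨G, hG⟩ : ∃ G : ℝ[X], G = w₂ ^ 3 * H₂ + w₁ ^ 3 * H₁ := ⟨_, rfl⟩
  have hF : F = (w₂ - w₁) ^ 2 * X ^ 4 + (-6 * G) * X ^ 6 + G ^ 2 * X ^ 12 := by
    simp only [F, comp_y, hτ₁, hτ₂, hG, hH₁, hH₂]
    ring
  refine ⟨?_, ?_, ?_⟩
  · intro j hj
    interval_cases j <;>
      simp [hF, coeff_mul_X_pow']
  · have h0 : ((w₂ - w₁) ^ 2).coeff 0 = (a₀ * (v₂₁ - v₁₁)) ^ 2 := by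
      rw [coeff_zero_eq_eval_zero]
      simp [hw₁, hw₂, hu]
      ring
    simp [hF, coeff_mul_X_pow', h0]
    ring
  · intro hv
    subst hv
    have hwdiff : (w₂ - w₁) ^ 2 = ((C v₂₂ - C v₁₂) ^ 2 * u ^ 4) * X ^ 4 := by
      rw [hw₁, hw₂]; ring
    have hG0 : G.coeff 0 = a₀ ^ 3 * v₂₁ ^ 3 := by
      rw [coeff_zero_eq_eval_zero]
      simp [hG, hH₁, hH₂, hw₁, hw₂, hu]
      ring
    constructor
    · simp [hF, coeff_mul_X_pow', hwdiff]
    · simp [hF, coeff_mul_X_pow', hwdiff, hG0]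
      ring
end

section
/- Consider the eight polynomial constraint functions of Stachel's extended double-Watt framework in the eight real variables (a₀, b₀, a₁, b₁, a₂, b₂, a₃, b₃): c₁ = a₀² + b₀² − 1, c₂ = (a₁ + 3)² + (b₁ + 1)² − 1, c₃ = (a₂ − 3)² + b₂² − 1, c₄ = a₃² + (b₃ + 1)² − 1, c₅ = (a₀ − a₁)² + (b₀ − b₁)² − 2, c₆ = (a₂ − a₃)² + (b₂ − b₃)² − 2, c₇ = ((a₂ + a₃ − a₀ − a₁)/2)² + ((b₂ + b₃ − b₀ − b₁)/2)² − 9, c₈ = a₀ + a₁ + a₂ + a₃. Then all eight constraints vanish at the configuration X = (−1, 0, −2, −1, 2, 0, 1, −1), and the 8×8 Jacobian matrix whose (i,j) entry is the partial derivative of c_j with respect to the i-th variable, evaluated at X, has rank 6. In particular X is a singular point of the shakiness variety V₁ = {det of the Jacobian = 0}. -/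
/-- The eight constraint functions of Stachel's extended double-Watt framework
in the variables `(a₀, b₀, a₁, b₁, a₂, b₂, a₃, b₃)`. -/
noncomputable def stachelConstraints : Fin 8 → (Fin 8 → ℝ) → ℝ :=
  ![fun x => x 0 ^ 2 + x 1 ^ 2 - 1,
    fun x => (x 2 + 3) ^ 2 + (x 3 + 1) ^ 2 - 1,
    fun x => (x 4 - 3) ^ 2 + x 5 ^ 2 - 1,
    fun x => x 6 ^ 2 + (x 7 + 1) ^ 2 - 1,
    fun x => (x 0 - x 2) ^ 2 + (x 1 - x 3) ^ 2 - 2,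
    fun x => (x 4 - x 6) ^ 2 + (x 5 - x 7) ^ 2 - 2,
    fun x => ((x 4 + x 6 - x 0 - x 2) / 2) ^ 2 +
      ((x 5 + x 7 - x 1 - x 3) / 2) ^ 2 - 9,
    fun x => x 0 + x 2 + x 4 + x 6]

/-- The cusp configuration of Stachel's extended double-Watt framework. -/
noncomputable def stachelConfig : Fin 8 → ℝ := ![-1, 0, -2, -1, 2, 0, 1, -1]

/-!
At `X` the rows of the Jacobian belonging to `b₁` and `b₃` are the negatives of those belonging
to `b₀` and `b₂`, so the Jacobian factors through `ℝ⁶`. The other six rows, restricted to the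
columns of the four arm and the two coupler constraints, form an invertible matrix, whose inverse
provides a left factor `C` with `C * J * D = 1`; hence the rank is exactly `6`.
-/

open Matrix

theorem Matrix.rank_eq_card_of_mul_eq_of_mul_mul_eq_one {m n k R : Type*} [Fintype m] [Fintype n]
    [Fintype k] [DecidableEq k] [CommRing R] [StrongRankCondition R] {M : Matrix m n R}
    {A : Matrix m k R} {B : Matrix k n R} {C : Matrix k m R} {D : Matrix n k R}
    (hM : A * B = M) (hCD : C * M * D = 1) :
    M.rank = Fintype.card k := by
  refine le_antisymm ?_ ?_
  · calc M.rank = (A * B).rank := by rw [hM]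
      _ ≤ B.rank := rank_mul_le_right A B
      _ ≤ Fintype.card k := B.rank_le_card_height
  · calc Fintype.card k = (C * M * D).rank := by rw [hCD, rank_one]
      _ ≤ (C * M).rank := rank_mul_le_left _ _
      _ ≤ M.rank := rank_mul_le_right _ _

theorem fderiv_pi_eval_apply {𝕜 ι : Type*} [NontriviallyNormedField 𝕜] [Fintype ι]
    {F : ι → Type*} [∀ i, NormedAddCommGroup (F i)] [∀ i, NormedSpace 𝕜 (F i)]
    (k : ι) (x v : ∀ i, F i) :
    fderiv 𝕜 (fun y : ∀ i, F i => y k) x v = v k := by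
  rw [(hasFDerivAt_apply k x).fderiv]
  rfl

theorem stachelConstraints_stachelConfig (j : Fin 8) : stachelConstraints j stachelConfig = 0 := by
  fin_cases j <;>
  simp only [Fin.zero_eta, Fin.mk_one, Fin.reduceFinMk, stachelConstraints, stachelConfig,
    cons_val] <;>
  norm_num

noncomputable def stachelJacobian : Matrix (Fin 8) (Fin 8) ℝ :=
  !![-2, 0, 0, 0, 2, 0, -3, 1;
      0, 0, 0, 0, 2, 0, 0, 0;
      0, 2, 0, 0, -2, 0, -3, 1;
      0, 0, 0, 0, -2, 0, 0, 0;
      0, 0, -2, 0, 0, 2, 3, 1;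
      0, 0, 0, 0, 0, 2, 0, 0;
      0, 0, 0, 2, 0, -2, 3, 1;
      0, 0, 0, 0, 0, -2, 0, 0]

theorem fderiv_stachelConstraints_apply (v : Fin 8 → ℝ) (j : Fin 8) :
    fderiv ℝ (stachelConstraints j) stachelConfig v = (v ᵥ* stachelJacobian) j := by
  fin_cases j <;>
  simp (disch := fun_prop) only [Fin.zero_eta, Fin.mk_one, Fin.reduceFinMk, Fin.isValue,
    stachelConstraints, stachelConfig, stachelJacobian, cons_val, cons_val_zero, cons_val_one,
    cons_val', cons_val_fin_one, of_apply, div_eq_mul_inv, fderiv_fun_add, fderiv_fun_sub,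
    fderiv_fun_pow, fderiv_mul_const, fderiv_fun_const, fderiv_pi_eval_apply, _root_.add_apply,
    _root_.sub_apply, _root_.smul_apply, Pi.zero_apply, _root_.zero_apply, smul_eq_mul,
    nsmul_eq_mul, Nat.add_one_sub_one, pow_one, vecMul, dotProduct, Fin.sum_univ_eight] <;>
  ring

theorem of_fderiv_stachelConstraints_single :
    (of fun i j : Fin 8 => fderiv ℝ (stachelConstraints j) stachelConfig (Pi.single i 1)) =
      stachelJacobian := by
  ext i j
  rw [of_apply, fderiv_stachelConstraints_apply, single_one_vecMul, row_apply]

theorem stachelJacobian_eq_mul :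
    (!![1, 0, 0, 0, 0, 0;
        0, 1, 0, 0, 0, 0;
        0, 0, 1, 0, 0, 0;
        0, -1, 0, 0, 0, 0;
        0, 0, 0, 1, 0, 0;
        0, 0, 0, 0, 1, 0;
        0, 0, 0, 0, 0, 1;
        0, 0, 0, 0, -1, 0] : Matrix (Fin 8) (Fin 6) ℝ) *
      (!![-2, 0, 0, 0, 2, 0, -3, 1;
           0, 0, 0, 0, 2, 0, 0, 0;
           0, 2, 0, 0, -2, 0, -3, 1;
           0, 0, -2, 0, 0, 2, 3, 1;
           0, 0, 0, 0, 0, 2, 0, 0;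
           0, 0, 0, 2, 0, -2, 3, 1] : Matrix (Fin 6) (Fin 8) ℝ) = stachelJacobian := by
  ext i j
  fin_cases i <;> fin_cases j <;> simp [stachelJacobian, mul_apply, Fin.sum_univ_succ]

theorem stachelJacobian_mul_mul_eq_one :
    (!![-1/2, 1/2, 0, 0, 0, 0, 0, 0;
         0, 1/2, 1/2, 0, 0, 0, 0, 0;
         0, 0, 0, 0, -1/2, 1/2, 0, 0;
         0, 0, 0, 0, 0, 1/2, 1/2, 0;
         0, 1/2, 0, 0, 0, 0, 0, 0;
         0, 0, 0, 0, 0, 1/2, 0, 0] : Matrix (Fin 6) (Fin 8) ℝ) * stachelJacobian *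
      (!![1, 0, 0, 0, 0, 0;
          0, 1, 0, 0, 0, 0;
          0, 0, 1, 0, 0, 0;
          0, 0, 0, 1, 0, 0;
          0, 0, 0, 0, 1, 0;
          0, 0, 0, 0, 0, 1;
          0, 0, 0, 0, 0, 0;
          0, 0, 0, 0, 0, 0] : Matrix (Fin 8) (Fin 6) ℝ) = 1 := by
  ext i j
  fin_cases i <;> fin_cases j <;> simp [stachelJacobian, mul_apply, Fin.sum_univ_eight]

theorem stachelJacobian_rank : stachelJacobian.rank = 6 :=
  (rank_eq_card_of_mul_eq_of_mul_mul_eq_one stachelJacobian_eq_mul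
    stachelJacobian_mul_mul_eq_one).trans (Fintype.card_fin 6)

/-- All eight constraints of Stachel's extended double-Watt framework vanish at
the configuration `X = (-1, 0, -2, -1, 2, 0, 1, -1)`, and the `8 × 8` Jacobian
matrix (whose `(i,j)` entry is the partial derivative of the `j`-th constraint
with respect to the `i`-th variable) has rank `6` there; in particular `X` is
a singular point of the shakiness variety. -/
theorem stachel_doubleWatt_singular_point :
    (∀ j : Fin 8, stachelConstraints j stachelConfig = 0) ∧
      Matrix.rank (Matrix.of fun i j : Fin 8 =>
        fderiv ℝ (stachelConstraints j) stachelConfig (Pi.single i 1)) = 6 := by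
  refine ⟨stachelConstraints_stachelConfig, ?_⟩
  rw [of_fderiv_stachelConstraints_single, stachelJacobian_rank]
end

section
/- In the polynomial ring ℚ[a, b, c, d], let I be the ideal generated by a, b², b − 2d − 2, and b + c². Then the quotient ring ℚ[a, b, c, d]/I is a finite-dimensional ℚ-vector space of dimension 4. (Hence the configuration (a, b, c, d) = (0, 0, 0, −1) of the Leonardo structure with λ = 2 is a realization of multiplicity 4, i.e. it has a third-order flexion, confirming Tarnai's (2^λ − 1)-order flex for λ = 2.) -/
/-!
Modulo `I` we have `a = 0`, `b = -c²` and `d = (b - 2)/2`, so the quotient is generated by `c`,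
and `c⁴ = (c² - b)(b + c²) + b² ∈ I`. Hence `ℚ[a, b, c, d]/I ≅ ℚ[t]/(t⁴)` via `c ↦ t`, the inverse
being induced by the parametrization `t ↦ (0, -t², t, -t²/2 - 1)` of the flex, and `ℚ[t]/(t⁴)` has
dimension `4`.
-/

open MvPolynomial

lemma two_mul_algebraMap_inv_two {A : Type*} [Semiring A] [Algebra ℚ A] :
    2 * algebraMap ℚ A 2⁻¹ = 1 := by
  rw [← map_ofNat (algebraMap ℚ A) 2, ← map_mul, mul_inv_cancel₀ two_ne_zero, map_one]

namespace LeonardoLambdaTwo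

noncomputable section

abbrev ideal : Ideal (MvPolynomial (Fin 4) ℚ) :=
  Ideal.span {X 0, X 1 ^ 2, X 1 - 2 * X 3 - 2, X 1 + X 2 ^ 2}

abbrev QuotientRing : Type := MvPolynomial (Fin 4) ℚ ⧸ ideal

abbrev FatPoint : Type := AdjoinRoot (Polynomial.X ^ 4 : Polynomial ℚ)

local notation "x" i => Ideal.Quotient.mk ideal (X i)

local notation "t" => AdjoinRoot.root (Polynomial.X ^ 4 : Polynomial ℚ)

lemma root_pow_four : t ^ 4 = 0 := by
  rw [← AdjoinRoot.mk_X, ← map_pow, AdjoinRoot.mk_self]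

lemma mk_generators_eq_zero :
    (x 0) = 0 ∧ (x 1) ^ 2 = 0 ∧ (x 1) - 2 * (x 3) - 2 = 0 ∧ (x 1) + (x 2) ^ 2 = 0 := by
  simp only [← map_pow, ← map_ofNat (Ideal.Quotient.mk ideal), ← map_mul, ← map_sub, ← map_add,
    Ideal.Quotient.eq_zero_iff_mem]
  exact ⟨Ideal.subset_span (by simp), Ideal.subset_span (by simp), Ideal.subset_span (by simp),
    Ideal.subset_span (by simp)⟩

lemma mk_X_two_pow_four : (x 2) ^ 4 = 0 := by
  obtain ⟨-, hb, -, hbc⟩ := mk_generators_eq_zero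
  linear_combination ((x 2) ^ 2 - (x 1)) * hbc + hb

def toFatPoint : QuotientRing →ₐ[ℚ] FatPoint :=
  Ideal.Quotient.liftₐ ideal (aeval ![0, -t ^ 2, t, -(algebraMap ℚ FatPoint 2⁻¹ * t ^ 2) - 1]) <| by
    show ideal ≤ RingHom.ker _
    rw [Ideal.span_le]
    rintro q (rfl | rfl | rfl | rfl) <;>
      simp only [SetLike.mem_coe, RingHom.mem_ker, map_sub, map_add, map_mul, map_pow, map_ofNat,
        aeval_X, Matrix.cons_val]
    · linear_combination root_pow_four
    · linear_combination t ^ 2 * two_mul_algebraMap_inv_two (A := FatPoint)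
    · ring

lemma toFatPoint_mk (p : MvPolynomial (Fin 4) ℚ) :
    toFatPoint (Ideal.Quotient.mk ideal p) =
      aeval ![0, -t ^ 2, t, -(algebraMap ℚ FatPoint 2⁻¹ * t ^ 2) - 1] p :=
  rfl

def ofFatPoint : FatPoint →ₐ[ℚ] QuotientRing :=
  AdjoinRoot.liftAlgHom _ (Algebra.ofId ℚ QuotientRing) (x 2) (by simpa using mk_X_two_pow_four)

lemma ofFatPoint_root : ofFatPoint t = x 2 :=
  AdjoinRoot.liftAlgHom_root _ _ _ _

lemma ofFatPoint_toFatPoint_mk_X (i : Fin 4) : ofFatPoint (toFatPoint (x i)) = x i := by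
  obtain ⟨ha, -, hbd, hbc⟩ := mk_generators_eq_zero
  fin_cases i <;>
    simp only [Fin.reduceFinMk, toFatPoint_mk, aeval_X, Matrix.cons_val, map_zero, map_one,
      map_neg, map_sub, map_mul, map_pow, AlgHom.commutes, ofFatPoint_root]
  · linear_combination -ha
  · linear_combination -hbc
  · linear_combination algebraMap ℚ QuotientRing 2⁻¹ * (hbd - hbc) +
      ((x 3) + 1) * two_mul_algebraMap_inv_two (A := QuotientRing)

def equivFatPoint : QuotientRing ≃ₐ[ℚ] FatPoint :=
  AlgEquiv.ofAlgHom toFatPoint ofFatPoint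
    (AdjoinRoot.algHom_ext (by simp [ofFatPoint_root, toFatPoint_mk]))
    (Ideal.Quotient.algHom_ext ℚ <| MvPolynomial.algHom_ext ofFatPoint_toFatPoint_mk_X)

end

end LeonardoLambdaTwo

open LeonardoLambdaTwo in
/-- The Leonardo structure with `λ = 2`: the quotient of `ℚ[a, b, c, d]` by the
primary ideal `⟨a, b², b - 2d - 2, b + c²⟩` supported at the configuration
`(0, 0, 0, -1)` is a `4`-dimensional `ℚ`-vector space, so this configuration is
a realization of multiplicity `4`, i.e. it has a third-order flexion. -/
theorem leonardo_lambda_two_multiplicity_four :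
    let a : MvPolynomial (Fin 4) ℚ := X 0
    let b : MvPolynomial (Fin 4) ℚ := X 1
    let c : MvPolynomial (Fin 4) ℚ := X 2
    let d : MvPolynomial (Fin 4) ℚ := X 3
    let I : Ideal (MvPolynomial (Fin 4) ℚ) :=
      Ideal.span {a, b ^ 2, b - 2 * d - 2, b + c ^ 2}
    FiniteDimensional ℚ (MvPolynomial (Fin 4) ℚ ⧸ I) ∧
      Module.finrank ℚ (MvPolynomial (Fin 4) ℚ ⧸ I) = 4 := by
  have : Module.Finite ℚ FatPoint := (Polynomial.monic_X_pow 4).finite_adjoinRoot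
  refine ⟨.equiv equivFatPoint.symm.toLinearEquiv, ?_⟩
  rw [equivFatPoint.toLinearEquiv.finrank_eq]
  exact finrank_quotient_span_eq_natDegree.trans (Polynomial.natDegree_X_pow 4)
end
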